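/- Let G(z) be a Hermitian rational matrix polynomial G(z) = Σ_{p=0}^d z^p A_p + Σ_{j=1}^k w_j(z) E_j with all A_p, E_j Hermitian and (w_j(z))* = w_j(z̄), and let λ ∈ ℝ with all w_j(λ) defined. Then the Hermitian structured eigenvalue backward error equals the unstructured one: η^{Herm}(G,λ) = η(G,λ) = σ_min(G(λ)) / ‖(1, λ, …, λ^d, w₁(λ), …, w_k(λ))‖. -/

import Mathlib

/-!
A perturbation `(ΔA, ΔE)` that makes `G(λ) - ΔG` singular, where
`ΔG = Σ λ^p ΔA_p + Σ w_j ΔE_j`, must satisfy `σ_min(G(λ)) ≤ ‖ΔG‖ ≤ ‖Λ‖ · ‖(ΔA, ΔE)‖`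
(triangle and Cauchy–Schwarz inequalities), so the unstructured backward error is at least
`σ_min(G(λ)) / ‖Λ‖`. Conversely, `λ` and the `w_j` are real, so `G(λ)` is Hermitian, and
`σ_min(G(λ)) = |μ|` for an eigenvalue `μ` of least modulus with unit eigenvector `x`.
The perturbation `ΔA_p = λ^p μ/‖Λ‖² · xx*`, `ΔE_j = w_j μ/‖Λ‖² · xx*` is Hermitian,
has `ΔG = μ xx*`, which kills `G(λ) x = μ x`, and has norm exactly `|μ| / ‖Λ‖`. Hence both
infima equal `σ_min(G(λ)) / ‖Λ‖`.
-/
open Matrix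

/-- The spectral (operator 2-) norm of a complex matrix. -/
noncomputable def specNorm {n : ℕ} (A : Matrix (Fin n) (Fin n) ℂ) : ℝ :=
  ‖Matrix.toEuclideanCLM (𝕜 := ℂ) A‖

/-- The Euclidean norm of a complex vector. -/
noncomputable def evNorm {n : ℕ} (v : Fin n → ℂ) : ℝ :=
  ‖(WithLp.equiv 2 (Fin n → ℂ)).symm v‖

/-- The smallest singular value of a complex matrix. -/
noncomputable def sigmaMin {n : ℕ} (A : Matrix (Fin n) (Fin n) ℂ) : ℝ :=
  sInf {r : ℝ | ∃ x : Fin n → ℂ, evNorm x = 1 ∧ r = evNorm (A.mulVec x)}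

section Norms

variable {n : ℕ}

lemma evNorm_eq_norm_toLp (v : Fin n → ℂ) : evNorm v = ‖WithLp.toLp 2 v‖ := rfl

lemma evNorm_smul (c : ℂ) (v : Fin n → ℂ) : evNorm (c • v) = ‖c‖ * evNorm v := by
  simp only [evNorm_eq_norm_toLp, WithLp.toLp_smul, norm_smul]

lemma evNorm_nonneg (v : Fin n → ℂ) : 0 ≤ evNorm v := norm_nonneg _

lemma evNorm_eq_zero_iff {v : Fin n → ℂ} : evNorm v = 0 ↔ v = 0 := by
  simp [evNorm_eq_norm_toLp]

lemma evNorm_mulVec_le (M : Matrix (Fin n) (Fin n) ℂ) (x : Fin n → ℂ) :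
    evNorm (M *ᵥ x) ≤ specNorm M * evNorm x := by
  simpa only [evNorm_eq_norm_toLp, toEuclideanCLM_toLp, specNorm] using
    (toEuclideanCLM (𝕜 := ℂ) M).le_opNorm (WithLp.toLp 2 x)

lemma specNorm_smul (c : ℂ) (M : Matrix (Fin n) (Fin n) ℂ) :
    specNorm (c • M) = ‖c‖ * specNorm M := by
  simp only [specNorm, map_smul, norm_smul]

lemma specNorm_vecMulVec_star_self (x : Fin n → ℂ) :
    specNorm (vecMulVec x (star x)) = evNorm x ^ 2 := by
  have h : toEuclideanCLM (𝕜 := ℂ) (vecMulVec x (star x))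
      = InnerProductSpace.rankOne ℂ (WithLp.toLp 2 x) (WithLp.toLp 2 x) := by
    refine ContinuousLinearMap.coe_injective ?_
    rw [coe_toEuclideanCLM_eq_toEuclideanLin, ← LinearEquiv.eq_symm_apply,
      InnerProductSpace.symm_toEuclideanLin_rankOne]
  rw [specNorm, h, InnerProductSpace.norm_rankOne, evNorm_eq_norm_toLp, sq]

lemma vecMulVec_star_self_mulVec {x : Fin n → ℂ} (hx : evNorm x = 1) :
    vecMulVec x (star x) *ᵥ x = x := by
  have h : star x ⬝ᵥ x = 1 := by
    rw [dotProduct_comm, ← EuclideanSpace.inner_toLp_toLp, inner_self_eq_norm_sq_to_K,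
      ← evNorm_eq_norm_toLp, hx]
    norm_num
  rw [vecMulVec_mulVec, h, MulOpposite.op_one, one_smul]

end Norms

lemma Matrix.isHermitian_vecMulVec_star_self {m : Type*} (x : m → ℂ) :
    (vecMulVec x (star x)).IsHermitian := by
  rw [IsHermitian, conjTranspose_vecMulVec, star_star]

lemma Matrix.IsHermitian.ofReal_smul {m : Type*} {M : Matrix m m ℂ} (hM : M.IsHermitian) (r : ℝ) :
    ((r : ℂ) • M).IsHermitian :=
  hM.smul (Complex.conj_ofReal r)

section SigmaMin

variable {n : ℕ}

lemma sigmaMin_le_evNorm_mulVec (G : Matrix (Fin n) (Fin n) ℂ) {x : Fin n → ℂ}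
    (hx : evNorm x = 1) : sigmaMin G ≤ evNorm (G *ᵥ x) :=
  csInf_le ⟨0, by rintro _ ⟨y, -, rfl⟩; exact evNorm_nonneg _⟩ ⟨x, hx, rfl⟩

lemma sigmaMin_le_specNorm_of_det_sub_eq_zero {G D : Matrix (Fin n) (Fin n) ℂ}
    (h : (G - D).det = 0) : sigmaMin G ≤ specNorm D := by
  obtain ⟨y, hy, hGy⟩ := exists_mulVec_eq_zero_iff.mpr h
  have hy' : evNorm y ≠ 0 := evNorm_eq_zero_iff.not.mpr hy
  set x := ((evNorm y)⁻¹ : ℂ) • y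
  have hx : evNorm x = 1 := by
    rw [evNorm_smul, norm_inv, Complex.norm_real, Real.norm_of_nonneg (evNorm_nonneg y),
      inv_mul_cancel₀ hy']
  have hGx : G *ᵥ x = D *ᵥ x := by
    rw [sub_mulVec, sub_eq_zero] at hGy
    simp only [x, mulVec_smul, hGy]
  calc sigmaMin G ≤ evNorm (G *ᵥ x) := sigmaMin_le_evNorm_mulVec G hx
    _ = evNorm (D *ᵥ x) := by rw [hGx]
    _ ≤ specNorm D := by simpa [hx] using evNorm_mulVec_le D x

lemma sigmaMin_fin_zero (G : Matrix (Fin 0) (Fin 0) ℂ) : sigmaMin G = 0 := by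
  have hempty : {r : ℝ | ∃ x : Fin 0 → ℂ, evNorm x = 1 ∧ r = evNorm (G *ᵥ x)} = ∅ := by
    refine Set.eq_empty_of_forall_notMem ?_
    rintro r ⟨x, hx, -⟩
    simp [evNorm_eq_zero_iff.mpr (Subsingleton.elim x 0)] at hx
  rw [sigmaMin, hempty, Real.sInf_empty]

end SigmaMin

lemma LinearMap.IsSymmetric.abs_eigenvalue_mul_norm_le {𝕜 E : Type*} [RCLike 𝕜]
    [NormedAddCommGroup E] [InnerProductSpace 𝕜 E] [FiniteDimensional 𝕜 E]
    {T : E →ₗ[𝕜] E} (hT : T.IsSymmetric) {n : ℕ} (hn : Module.finrank 𝕜 E = n) {i : Fin n}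
    (hi : ∀ j, |hT.eigenvalues hn i| ≤ |hT.eigenvalues hn j|) (v : E) :
    |hT.eigenvalues hn i| * ‖v‖ ≤ ‖T v‖ := by
  set b := hT.eigenvectorBasis hn
  rw [← b.repr.norm_map v, ← b.repr.norm_map (T v), EuclideanSpace.norm_eq,
    EuclideanSpace.norm_eq, ← Real.sqrt_sq (abs_nonneg (hT.eigenvalues hn i)), ← Real.sqrt_mul
    (sq_nonneg _), Finset.mul_sum]
  refine Real.sqrt_le_sqrt (Finset.sum_le_sum fun j _ => ?_)
  rw [hT.eigenvectorBasis_apply_self_apply, norm_mul, mul_pow, RCLike.norm_ofReal]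
  exact mul_le_mul_of_nonneg_right (pow_le_pow_left₀ (abs_nonneg _) (hi j) 2) (sq_nonneg _)

lemma Matrix.IsHermitian.exists_eigenvector_sigmaMin_eq_abs {n : ℕ} [NeZero n]
    {G : Matrix (Fin n) (Fin n) ℂ} (hG : G.IsHermitian) :
    ∃ (x : Fin n → ℂ) (μ : ℝ), evNorm x = 1 ∧ G *ᵥ x = (μ : ℂ) • x ∧ sigmaMin G = |μ| := by
  have hT := isSymmetric_toEuclideanLin_iff.mpr hG
  have hn : Module.finrank ℂ (EuclideanSpace ℂ (Fin n)) = n := finrank_euclideanSpace_fin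
  obtain ⟨i, hi⟩ := Finite.exists_min fun j => |hT.eigenvalues hn j|
  set u := hT.eigenvectorBasis hn i
  have hu : evNorm u.ofLp = 1 := (hT.eigenvectorBasis hn).orthonormal.1 i
  have hGu : G *ᵥ u.ofLp = (hT.eigenvalues hn i : ℂ) • u.ofLp :=
    congrArg WithLp.ofLp (hT.apply_eigenvectorBasis hn i)
  refine ⟨u.ofLp, _, hu, hGu, IsLeast.csInf_eq ⟨⟨u.ofLp, hu, ?_⟩, ?_⟩⟩
  · rw [hGu, evNorm_smul, hu, mul_one, Complex.norm_real, Real.norm_eq_abs]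
  · rintro _ ⟨y, hy, rfl⟩
    have := hT.abs_eigenvalue_mul_norm_le hn hi (WithLp.toLp 2 y)
    rwa [← evNorm_eq_norm_toLp, hy, mul_one] at this

lemma sum_add_sum_mul_le_sqrt_mul_sqrt {ι κ : Type*} [Fintype ι] [Fintype κ]
    (a c : ι → ℝ) (b e : κ → ℝ) :
    ∑ i, a i * c i + ∑ j, b j * e j
      ≤ √(∑ i, a i ^ 2 + ∑ j, b j ^ 2) * √(∑ i, c i ^ 2 + ∑ j, e j ^ 2) := by
  simpa [Fintype.sum_sum_type] using
    Real.sum_mul_le_sqrt_mul_sqrt Finset.univ (Sum.elim a b) (Sum.elim c e)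

section Perturbation

variable {n : ℕ} {ι κ : Type*} [Fintype ι] [Fintype κ]

lemma specNorm_sum_smul_add_sum_smul_le (a : ι → ℝ) (b : κ → ℝ)
    (ΔA : ι → Matrix (Fin n) (Fin n) ℂ) (ΔE : κ → Matrix (Fin n) (Fin n) ℂ) :
    specNorm (∑ i, (a i : ℂ) • ΔA i + ∑ j, (b j : ℂ) • ΔE j)
      ≤ √(∑ i, a i ^ 2 + ∑ j, b j ^ 2)
        * √(∑ i, specNorm (ΔA i) ^ 2 + ∑ j, specNorm (ΔE j) ^ 2) := by
  calc specNorm (∑ i, (a i : ℂ) • ΔA i + ∑ j, (b j : ℂ) • ΔE j)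
      ≤ ∑ i, |a i| * specNorm (ΔA i) + ∑ j, |b j| * specNorm (ΔE j) := by
        simp only [specNorm, map_add, map_sum]
        refine (norm_add_le _ _).trans (add_le_add ?_ ?_) <;>
        refine (norm_sum_le _ _).trans_eq (Finset.sum_congr rfl fun i _ => ?_) <;>
        rw [map_smul, norm_smul, Complex.norm_real, Real.norm_eq_abs]
    _ ≤ _ := by
        simpa only [sq_abs] using sum_add_sum_mul_le_sqrt_mul_sqrt (fun i => |a i|)
          (fun i => specNorm (ΔA i)) (fun j => |b j|) (fun j => specNorm (ΔE j))

lemma sigmaMin_div_le_of_det_sub_eq_zero {G : Matrix (Fin n) (Fin n) ℂ} (a : ι → ℝ) (b : κ → ℝ)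
    (ΔA : ι → Matrix (Fin n) (Fin n) ℂ) (ΔE : κ → Matrix (Fin n) (Fin n) ℂ)
    (h : (G - (∑ i, (a i : ℂ) • ΔA i + ∑ j, (b j : ℂ) • ΔE j)).det = 0) :
    sigmaMin G / √(∑ i, a i ^ 2 + ∑ j, b j ^ 2)
      ≤ √(∑ i, specNorm (ΔA i) ^ 2 + ∑ j, specNorm (ΔE j) ^ 2) := by
  refine div_le_of_le_mul₀ (Real.sqrt_nonneg _) (Real.sqrt_nonneg _) ?_
  rw [mul_comm]
  exact (sigmaMin_le_specNorm_of_det_sub_eq_zero h).trans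
    (specNorm_sum_smul_add_sum_smul_le a b ΔA ΔE)

lemma exists_isHermitian_perturbation_det_sub_eq_zero [NeZero n] {G : Matrix (Fin n) (Fin n) ℂ}
    (hG : G.IsHermitian) (a : ι → ℝ) (b : κ → ℝ) (hab : 0 < ∑ i, a i ^ 2 + ∑ j, b j ^ 2) :
    ∃ (ΔA : ι → Matrix (Fin n) (Fin n) ℂ) (ΔE : κ → Matrix (Fin n) (Fin n) ℂ),
      (∀ i, (ΔA i).IsHermitian) ∧ (∀ j, (ΔE j).IsHermitian) ∧
      (G - (∑ i, (a i : ℂ) • ΔA i + ∑ j, (b j : ℂ) • ΔE j)).det = 0 ∧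
      √(∑ i, specNorm (ΔA i) ^ 2 + ∑ j, specNorm (ΔE j) ^ 2)
        = sigmaMin G / √(∑ i, a i ^ 2 + ∑ j, b j ^ 2) := by
  obtain ⟨x, μ, hx, hGx, hσ⟩ := hG.exists_eigenvector_sigmaMin_eq_abs
  set S := ∑ i, a i ^ 2 + ∑ j, b j ^ 2
  set P := vecMulVec x (star x)
  set t := μ / S
  have hP : P.IsHermitian := isHermitian_vecMulVec_star_self x
  have hPnorm : specNorm P = 1 := by rw [specNorm_vecMulVec_star_self, hx, one_pow]
  refine ⟨fun i => ((t * a i : ℝ) : ℂ) • P, fun j => ((t * b j : ℝ) : ℂ) • P,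
    fun i => hP.ofReal_smul _, fun j => hP.ofReal_smul _, ?_, ?_⟩
  · have hD : ∑ i, (a i : ℂ) • ((t * a i : ℝ) : ℂ) • P + ∑ j, (b j : ℂ) • ((t * b j : ℝ) : ℂ) • P
        = (μ : ℂ) • P := by
      simp only [smul_smul, ← Finset.sum_smul, ← add_smul]
      have hsum : ∑ i, a i * (t * a i) + ∑ j, b j * (t * b j) = t * S := by
        simp only [S, mul_add, Finset.mul_sum]
        congr 1 <;> exact Finset.sum_congr rfl fun _ _ => by ring
      rw [div_mul_cancel₀ μ hab.ne'] at hsum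
      congr 1
      exact_mod_cast hsum
    refine exists_mulVec_eq_zero_iff.mp ⟨x, ?_, ?_⟩
    · rintro rfl
      simp [evNorm_eq_zero_iff.mpr rfl] at hx
    · rw [hD, sub_mulVec, hGx, smul_mulVec, vecMulVec_star_self_mulVec hx, sub_self]
  · have hnorm : ∑ i, specNorm (((t * a i : ℝ) : ℂ) • P) ^ 2
        + ∑ j, specNorm (((t * b j : ℝ) : ℂ) • P) ^ 2 = t ^ 2 * S := by
      simp only [specNorm_smul, Complex.norm_real, Real.norm_eq_abs, hPnorm, mul_one, sq_abs,
        mul_pow, ← Finset.mul_sum, ← mul_add, S]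
    rw [hnorm, Real.sqrt_mul (sq_nonneg _), Real.sqrt_sq_eq_abs, hσ, abs_div, abs_of_pos hab,
      div_mul_eq_mul_div, mul_div_assoc, Real.sqrt_div_self', mul_one_div]

theorem sInf_perturbation_norms_eq_sigmaMin_div [NeZero n] {G : Matrix (Fin n) (Fin n) ℂ}
    (hG : G.IsHermitian) (a : ι → ℝ) (b : κ → ℝ) (hab : 0 < ∑ i, a i ^ 2 + ∑ j, b j ^ 2) :
    sInf {r : ℝ | ∃ (ΔA : ι → Matrix (Fin n) (Fin n) ℂ) (ΔE : κ → Matrix (Fin n) (Fin n) ℂ),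
        (∀ i, (ΔA i).IsHermitian) ∧ (∀ j, (ΔE j).IsHermitian) ∧
        (G - (∑ i, (a i : ℂ) • ΔA i + ∑ j, (b j : ℂ) • ΔE j)).det = 0 ∧
        r = √(∑ i, specNorm (ΔA i) ^ 2 + ∑ j, specNorm (ΔE j) ^ 2)}
      = sigmaMin G / √(∑ i, a i ^ 2 + ∑ j, b j ^ 2) ∧
    sInf {r : ℝ | ∃ (ΔA : ι → Matrix (Fin n) (Fin n) ℂ) (ΔE : κ → Matrix (Fin n) (Fin n) ℂ),
        (G - (∑ i, (a i : ℂ) • ΔA i + ∑ j, (b j : ℂ) • ΔE j)).det = 0 ∧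
        r = √(∑ i, specNorm (ΔA i) ^ 2 + ∑ j, specNorm (ΔE j) ^ 2)}
      = sigmaMin G / √(∑ i, a i ^ 2 + ∑ j, b j ^ 2) := by
  obtain ⟨ΔA, ΔE, hΔA, hΔE, hdet, hnorm⟩ :=
    exists_isHermitian_perturbation_det_sub_eq_zero hG a b hab
  refine ⟨IsLeast.csInf_eq ⟨⟨ΔA, ΔE, hΔA, hΔE, hdet, hnorm.symm⟩, ?_⟩,
    IsLeast.csInf_eq ⟨⟨ΔA, ΔE, hdet, hnorm.symm⟩, ?_⟩⟩
  · rintro _ ⟨ΔA, ΔE, -, -, h, rfl⟩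
    exact sigmaMin_div_le_of_det_sub_eq_zero a b ΔA ΔE h
  · rintro _ ⟨ΔA, ΔE, h, rfl⟩
    exact sigmaMin_div_le_of_det_sub_eq_zero a b ΔA ΔE h

end Perturbation

/-- For a Hermitian rational matrix polynomial evaluated at a real point `λ`
(so that the values `wⱼ(λ)` are real), the Hermitian structured eigenvalue backward
error equals the unstructured one, which equals
`σ_min(G(λ)) / ‖(1,λ,…,λ^d,w₁(λ),…,w_k(λ))‖`. -/
theorem hermitian_structured_backward_error_eq_unstructured_real {n d k : ℕ}
    (A : Fin (d + 1) → Matrix (Fin n) (Fin n) ℂ)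
    (E : Fin k → Matrix (Fin n) (Fin n) ℂ)
    (hA : ∀ p, (A p).IsHermitian) (hE : ∀ j, (E j).IsHermitian)
    (lam : ℝ) (w : Fin k → ℝ) :
    sInf {r : ℝ |
        ∃ (ΔA : Fin (d + 1) → Matrix (Fin n) (Fin n) ℂ)
          (ΔE : Fin k → Matrix (Fin n) (Fin n) ℂ),
          (∀ p, (ΔA p).IsHermitian) ∧ (∀ j, (ΔE j).IsHermitian) ∧
          (∑ p : Fin (d + 1), (lam : ℂ) ^ (p : ℕ) • (A p - ΔA p)
              + ∑ j, (w j : ℂ) • (E j - ΔE j)).det = 0 ∧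
          r = Real.sqrt (∑ p : Fin (d + 1), specNorm (ΔA p) ^ 2
              + ∑ j, specNorm (ΔE j) ^ 2)} =
      sInf {r : ℝ |
        ∃ (ΔA : Fin (d + 1) → Matrix (Fin n) (Fin n) ℂ)
          (ΔE : Fin k → Matrix (Fin n) (Fin n) ℂ),
          (∑ p : Fin (d + 1), (lam : ℂ) ^ (p : ℕ) • (A p - ΔA p)
              + ∑ j, (w j : ℂ) • (E j - ΔE j)).det = 0 ∧
          r = Real.sqrt (∑ p : Fin (d + 1), specNorm (ΔA p) ^ 2
              + ∑ j, specNorm (ΔE j) ^ 2)} ∧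
    sInf {r : ℝ |
        ∃ (ΔA : Fin (d + 1) → Matrix (Fin n) (Fin n) ℂ)
          (ΔE : Fin k → Matrix (Fin n) (Fin n) ℂ),
          (∑ p : Fin (d + 1), (lam : ℂ) ^ (p : ℕ) • (A p - ΔA p)
              + ∑ j, (w j : ℂ) • (E j - ΔE j)).det = 0 ∧
          r = Real.sqrt (∑ p : Fin (d + 1), specNorm (ΔA p) ^ 2
              + ∑ j, specNorm (ΔE j) ^ 2)} =
      sigmaMin (∑ p : Fin (d + 1), (lam : ℂ) ^ (p : ℕ) • A p + ∑ j, (w j : ℂ) • E j) /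
        Real.sqrt (∑ p : Fin (d + 1), (|lam| ^ (p : ℕ)) ^ 2 + ∑ j, |w j| ^ 2) := by
  set a : Fin (d + 1) → ℝ := fun p => lam ^ (p : ℕ)
  set G := ∑ p, (a p : ℂ) • A p + ∑ j, (w j : ℂ) • E j
  have hG : G.IsHermitian :=
    (isSelfAdjoint_sum _ fun p _ => (hA p).ofReal_smul (a p)).add
      (isSelfAdjoint_sum _ fun j _ => (hE j).ofReal_smul (w j))
  have hsplit : ∀ (ΔA : Fin (d + 1) → Matrix (Fin n) (Fin n) ℂ)
      (ΔE : Fin k → Matrix (Fin n) (Fin n) ℂ),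
      ∑ p : Fin (d + 1), (lam : ℂ) ^ (p : ℕ) • (A p - ΔA p) + ∑ j, (w j : ℂ) • (E j - ΔE j)
        = G - (∑ p, (a p : ℂ) • ΔA p + ∑ j, (w j : ℂ) • ΔE j) := by
    intro ΔA ΔE
    simp only [G, a, smul_sub, Finset.sum_sub_distrib, Complex.ofReal_pow]
    abel
  have hG_eq : ∑ p : Fin (d + 1), (lam : ℂ) ^ (p : ℕ) • A p + ∑ j, (w j : ℂ) • E j = G := by
    simp only [G, a, Complex.ofReal_pow]
  have hS : ∑ p : Fin (d + 1), (|lam| ^ (p : ℕ)) ^ 2 + ∑ j, |w j| ^ 2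
      = ∑ p, a p ^ 2 + ∑ j, w j ^ 2 := by
    congr 1 <;> refine Finset.sum_congr rfl fun _ _ => ?_
    · rw [← abs_pow, sq_abs]
    · rw [sq_abs]
  simp only [hsplit, hG_eq, hS]
  rcases Nat.eq_zero_or_pos n with rfl | hn
  · -- a `0 × 0` determinant is `1`, so every set is empty and every side is `sInf ∅ = 0`
    simp [sigmaMin_fin_zero]
  have : NeZero n := ⟨hn.ne'⟩
  have hpos : 0 < ∑ p, a p ^ 2 + ∑ j, w j ^ 2 := by
    rw [Fin.sum_univ_succ]
    simp only [a, Fin.val_zero, pow_zero, one_pow]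
    positivity
  obtain ⟨hh, hu⟩ := sInf_perturbation_norms_eq_sigmaMin_div hG a w hpos
  exact ⟨hh.trans hu.symm, hu⟩
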